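/- arXiv:0910.0608 — 8 statements merged into one kernel-verified Lean document; each statement's English description precedes it below -/
import Mathlib

section
/- Let V be a real normed space satisfying the Aronszajn criterion. If p and q are nonzero vectors with ‖p + q‖ = ‖p - q‖, then for all natural numbers a and b, ‖a • p + b • q‖ = ‖a • p - b • q‖. -/
/-!
Apply the Aronszajn criterion to the pairs `(x + (n+1)y, y)` and `(x - (n+1)y, -y)`: the norms
agree termwise, and the differences `x + ny`, `x - ny` have equal norms by induction, so the sums
`x + (n+2)y`, `x - (n+2)y` have equal norms too. Hence isosceles orthogonality `‖x + y‖ = ‖x - y‖`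
passes from `y` to its natural multiples, and by symmetry from `x` to its natural multiples.
-/

section Aronszajn

variable {V : Type*} [SeminormedAddCommGroup V]

def AronszajnCriterion (V : Type*) [SeminormedAddCommGroup V] : Prop :=
  ∀ v₁ w₁ v₂ w₂ : V, ‖v₁‖ = ‖v₂‖ → ‖w₁‖ = ‖w₂‖ → ‖v₁ - w₁‖ = ‖v₂ - w₂‖ → ‖v₁ + w₁‖ = ‖v₂ + w₂‖

def IsoscelesOrthogonal (x y : V) : Prop :=
  ‖x + y‖ = ‖x - y‖

theorem IsoscelesOrthogonal.symm {x y : V} (h : IsoscelesOrthogonal x y) :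
    IsoscelesOrthogonal y x := by
  unfold IsoscelesOrthogonal at *
  rwa [add_comm, norm_sub_rev]

theorem AronszajnCriterion.isoscelesOrthogonal_nsmul_right (hA : AronszajnCriterion V)
    {x y : V} (h : IsoscelesOrthogonal x y) (n : ℕ) : IsoscelesOrthogonal x (n • y) := by
  induction n using Nat.twoStepInduction with
  | zero => simp [IsoscelesOrthogonal]
  | one => simpa using h
  | more n ih ih₁ =>
    unfold IsoscelesOrthogonal at ih ih₁ ⊢
    have hdiff : ‖x + (n + 1) • y - y‖ = ‖x - (n + 1) • y - -y‖ := by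
      convert ih using 2 <;> rw [succ_nsmul] <;> abel
    have hsum := hA _ y _ (-y) ih₁ (norm_neg y).symm hdiff
    convert hsum using 2 <;> rw [succ_nsmul _ (n + 1)] <;> abel

theorem AronszajnCriterion.isoscelesOrthogonal_nsmul (hA : AronszajnCriterion V) {x y : V}
    (h : IsoscelesOrthogonal x y) (a b : ℕ) : IsoscelesOrthogonal (a • x) (b • y) :=
  hA.isoscelesOrthogonal_nsmul_right (hA.isoscelesOrthogonal_nsmul_right h.symm a).symm b

end Aronszajn

theorem stmt_1_general (V : Type*) [NormedAddCommGroup V]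
    (hA : ∀ v₁ w₁ v₂ w₂ : V, ‖v₁‖ = ‖v₂‖ → ‖w₁‖ = ‖w₂‖ → ‖v₁ - w₁‖ = ‖v₂ - w₂‖ → ‖v₁ + w₁‖ = ‖v₂ + w₂‖)
    (p q : V) (hpq : ‖p + q‖ = ‖p - q‖) :
    ∀ a b : ℕ, ‖a • p + b • q‖ = ‖a • p - b • q‖ :=
  AronszajnCriterion.isoscelesOrthogonal_nsmul hA hpq

theorem stmt_1 (V : Type*) [NormedAddCommGroup V] [NormedSpace ℝ V]
    (hA : ∀ v₁ w₁ v₂ w₂ : V, ‖v₁‖ = ‖v₂‖ → ‖w₁‖ = ‖w₂‖ → ‖v₁ - w₁‖ = ‖v₂ - w₂‖ → ‖v₁ + w₁‖ = ‖v₂ + w₂‖)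
    (p q : V) (hp : p ≠ 0) (hq : q ≠ 0) (hpq : ‖p + q‖ = ‖p - q‖) :
    ∀ a b : ℕ, ‖a • p + b • q‖ = ‖a • p - b • q‖ :=
  stmt_1_general V hA p q hpq
end

section
/- Let V be a real normed space and e₁ a unit vector in V. If x is a unit vector with e₁ and x linearly independent, then there exists a unit vector e₂ in the span of e₁ and x such that ‖e₁ + e₂‖ = ‖e₁ - e₂‖. -/
/-!
The function `v ↦ ‖e₁ + v‖ - ‖e₁ - v‖` is continuous and odd, so on the unit sphere of the
plane spanned by `e₁` and `x`, which is connected, it takes values of both signs and hence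
vanishes somewhere.
-/

open Metric

theorem one_lt_rank_span_pair {R M : Type*} [Ring R] [StrongRankCondition R] [AddCommGroup M]
    [Module R M] {a b : M} (h : LinearIndependent R ![a, b]) :
    1 < Module.rank R (Submodule.span R {a, b}) := by
  have := nontrivial_of_invariantBasisNumber R
  apply Module.one_lt_rank_of_one_lt_finrank
  rw [← Matrix.range_cons_cons_empty a b ![], finrank_span_eq_card h]
  simp

theorem exists_mem_sphere_eq_zero_of_odd {E : Type*} [NormedAddCommGroup E] [NormedSpace ℝ E]
    (hE : 1 < Module.rank ℝ E) {r : ℝ} (hr : 0 ≤ r) {f : E → ℝ}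
    (hf : ContinuousOn f (sphere 0 r)) (hodd : ∀ v, f (-v) = -f v) :
    ∃ v ∈ sphere (0 : E) r, f v = 0 := by
  have : Nontrivial E := rank_pos_iff_nontrivial.mp (zero_lt_one.trans hE)
  obtain ⟨v, hv⟩ := exists_norm_eq E hr
  have hv_mem : v ∈ sphere (0 : E) r := mem_sphere_zero_iff_norm.mpr hv
  have hneg_mem : -v ∈ sphere (0 : E) r := mem_sphere_zero_iff_norm.mpr (by rwa [norm_neg])
  have hconn := isPreconnected_sphere hE 0 r
  rcases le_total (f v) 0 with h | h
  · exact hconn.intermediate_value hv_mem hneg_mem hf ⟨h, by rw [hodd]; linarith⟩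
  · exact hconn.intermediate_value hneg_mem hv_mem hf ⟨by rw [hodd]; linarith, h⟩

theorem exists_norm_eq_one_norm_add_eq_norm_sub {E : Type*} [NormedAddCommGroup E]
    [NormedSpace ℝ E] (hE : 1 < Module.rank ℝ E) (e : E) :
    ∃ v : E, ‖v‖ = 1 ∧ ‖e + v‖ = ‖e - v‖ := by
  obtain ⟨v, hv, hf⟩ := exists_mem_sphere_eq_zero_of_odd hE zero_le_one
    (f := fun v => ‖e + v‖ - ‖e - v‖) (by fun_prop)
    (fun v => by simp only [sub_neg_eq_add, ← sub_eq_add_neg]; ring)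
  exact ⟨v, mem_sphere_zero_iff_norm.mp hv, sub_eq_zero.mp hf⟩

theorem stmt_6_general (V : Type*) [NormedAddCommGroup V] [NormedSpace ℝ V]
    (e₁ x : V)
    (hind : LinearIndependent ℝ ![e₁, x]) :
    ∃ e₂ ∈ Submodule.span ℝ {e₁, x}, ‖e₂‖ = 1 ∧ ‖e₁ + e₂‖ = ‖e₁ - e₂‖ := by
  obtain ⟨v, hv, hsymm⟩ := exists_norm_eq_one_norm_add_eq_norm_sub (one_lt_rank_span_pair hind)
    ⟨e₁, Submodule.subset_span (Set.mem_insert _ _)⟩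
  exact ⟨v, v.2, hv, hsymm⟩

theorem stmt_6 (V : Type*) [NormedAddCommGroup V] [NormedSpace ℝ V]
    (e₁ x : V) (he₁ : ‖e₁‖ = 1) (hx : ‖x‖ = 1)
    (hind : LinearIndependent ℝ ![e₁, x]) :
    ∃ e₂ ∈ Submodule.span ℝ {e₁, x}, ‖e₂‖ = 1 ∧ ‖e₁ + e₂‖ = ‖e₁ - e₂‖ :=
  stmt_6_general V e₁ x hind
end

section
/- Let V be a 2-dimensional real normed space such that whenever p and q are nonzero vectors with ‖p + q‖ = ‖p - q‖, there exists a linear isometry μ : V → V with μ(p) = p and μ(q) = -q. Then the norm of V arises from an inner product, i.e., there exists an inner product ⟪·,·⟫ on V with ‖v‖² = ⟪v, v⟫ for all v. -/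
/-!
Linear isometries act transitively on each sphere: if `‖x‖ = ‖y‖`, the diagonals `x + y` and
`x - y` of the rhombus spanned by `x` and `y` satisfy the hypothesis, and the isometry fixing
`x + y` and negating `x - y` sends `x` to `y`. The group of linear isometries is compact, so
averaging a Euclidean norm square over its Haar measure yields an isometry-invariant quadratic
form `Q`. Transitivity makes `Q` constant on the unit sphere, hence `Q = c ‖·‖²` with `c > 0`,
so the norm satisfies the parallelogram law and comes from an inner product
(Jordan–von Neumann).
-/

open MeasureTheory

section Averaging

variable {V : Type*} [NormedAddCommGroup V] [NormedSpace ℝ V] [FiniteDimensional ℝ V]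
  {G : Type*} [Group G] [MeasurableSpace G]

noncomputable def averagedNormSq (μ : Measure G) (ρ : G →* V →L[ℝ] V) (v : V) : ℝ :=
  ∫ g, ‖toEuclidean (ρ g⁻¹ v)‖ ^ 2 ∂μ

variable (μ : Measure G) {ρ : G →* V →L[ℝ] V}

theorem averagedNormSq_smul (t : ℝ) (v : V) :
    averagedNormSq μ ρ (t • v) = t ^ 2 * averagedNormSq μ ρ v := by
  simp only [averagedNormSq, map_smul, norm_smul, mul_pow, Real.norm_eq_abs, sq_abs]
  exact integral_const_mul _ _

theorem averagedNormSq_apply [MeasurableMul G] [μ.IsMulLeftInvariant] (h : G) (v : V) :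
    averagedNormSq μ ρ (ρ h v) = averagedNormSq μ ρ v := by
  have := integral_mul_left_eq_self (μ := μ) (fun g => ‖toEuclidean (ρ g⁻¹ v)‖ ^ 2) h⁻¹
  simpa [averagedNormSq, mul_inv_rev, map_mul] using this

variable [TopologicalSpace G] [ContinuousInv G] [CompactSpace G] [OpensMeasurableSpace G]
  [IsFiniteMeasure μ]

theorem integrable_norm_sq_toEuclidean_apply (hρ : Continuous ρ) (v : V) :
    Integrable (fun g => ‖toEuclidean (ρ g⁻¹ v)‖ ^ 2) μ :=
  Continuous.integrable_of_hasCompactSupport (by fun_prop) (.of_compactSpace _)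

theorem averagedNormSq_add_add_sub (hρ : Continuous ρ) (x y : V) :
    averagedNormSq μ ρ (x + y) + averagedNormSq μ ρ (x - y) =
      2 * (averagedNormSq μ ρ x + averagedNormSq μ ρ y) := by
  have hint := integrable_norm_sq_toEuclidean_apply μ hρ
  simp only [averagedNormSq]
  rw [← integral_add (hint _) (hint _), ← integral_add (hint _) (hint _), ← integral_const_mul]
  congr 1 with g
  simpa only [map_add, map_sub] using parallelogram_law_with_norm ℝ _ _

theorem averagedNormSq_pos [μ.IsOpenPosMeasure] (hρ : Continuous ρ) {v : V} (hv : v ≠ 0) :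
    0 < averagedNormSq μ ρ v := by
  have hsupp : Function.support (fun g => ‖toEuclidean (ρ g⁻¹ v)‖ ^ 2) = Set.univ := by
    refine Set.eq_univ_of_forall fun g => ?_
    have hunit : ρ g * ρ g⁻¹ = 1 := by rw [← map_mul, mul_inv_cancel, map_one]
    have : ρ g⁻¹ v ≠ 0 := fun h => hv (by simpa [h] using congr($hunit v).symm)
    simpa using this
  rw [averagedNormSq, integral_pos_iff_support_of_nonneg (fun _ => by positivity)
    (integrable_norm_sq_toEuclidean_apply μ hρ v), hsupp]
  exact isOpen_univ.measure_pos μ Set.univ_nonempty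

end Averaging

section IsometryUnits

variable (V : Type*) [NormedAddCommGroup V] [NormedSpace ℝ V]

def isometryUnits : Subgroup (V →L[ℝ] V)ˣ where
  carrier := {u | ∀ v, ‖(u : V →L[ℝ] V) v‖ = ‖v‖}
  one_mem' _ := rfl
  mul_mem' ha hb v := (ha _).trans (hb v)
  inv_mem' {u} hu v := by
    have hinv : (u : V →L[ℝ] V) ((↑u⁻¹ : V →L[ℝ] V) v) = v := congr($(u.mul_inv) v)
    rw [← hu, hinv]

variable {V}

theorem LinearIsometryEquiv.toUnit_mem_isometryUnits (g : V ≃ₗᵢ[ℝ] V) :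
    g.toContinuousLinearEquiv.toUnit ∈ isometryUnits V :=
  g.norm_map

variable [FiniteDimensional ℝ V]

theorem isCompact_isometryUnits : IsCompact (isometryUnits V : Set (V →L[ℝ] V)ˣ) := by
  rw [Units.isOpenEmbedding_val.isCompact_iff]
  have himage : Units.val '' (isometryUnits V : Set (V →L[ℝ] V)ˣ) =
      {f : V →L[ℝ] V | ∀ v, ‖f v‖ = ‖v‖} := by
    refine Set.Subset.antisymm (Set.image_subset_iff.2 fun u hu => hu) fun f hf => ?_
    let e := (LinearIsometry.mk (f : V →ₗ[ℝ] V) hf).toLinearIsometryEquiv rfl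
    exact ⟨_, e.toUnit_mem_isometryUnits, rfl⟩
  rw [himage]
  refine (isCompact_closedBall (0 : V →L[ℝ] V) 1).of_isClosed_subset ?_ fun f hf => ?_
  · simp only [Set.ofPred_forall]
    exact isClosed_iInter fun v => isClosed_eq (by fun_prop) continuous_const
  · exact mem_closedBall_zero_iff.2 (f.opNorm_le_bound zero_le_one fun v => by simp [hf v])

instance : CompactSpace (isometryUnits V) :=
  isCompact_iff_compactSpace.1 isCompact_isometryUnits

end IsometryUnits

theorem exists_linearIsometryEquiv_apply_eq_of_reflections
    {V : Type*} [NormedAddCommGroup V] [NormedSpace ℝ V] [FiniteDimensional ℝ V]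
    (hrefl : ∀ p q : V, p ≠ 0 → q ≠ 0 → ‖p + q‖ = ‖p - q‖ →
      ∃ μ : V →ₗᵢ[ℝ] V, μ p = p ∧ μ q = -q) {x y : V} (hxy : ‖x‖ = ‖y‖) :
    ∃ g : V ≃ₗᵢ[ℝ] V, g x = y := by
  by_cases h_eq : y = x
  · exact ⟨LinearIsometryEquiv.refl ℝ V, h_eq.symm⟩
  by_cases h_neg : y = -x
  · exact ⟨LinearIsometryEquiv.neg ℝ, h_neg.symm⟩
  have hp : x + y ≠ 0 := fun h => h_neg (by linear_combination (norm := module) h)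
  have hq : x - y ≠ 0 := fun h => h_eq (by linear_combination (norm := module) -h)
  have hdiag : ‖(x + y) + (x - y)‖ = ‖(x + y) - (x - y)‖ := by
    rw [show (x + y) + (x - y) = (2 : ℝ) • x by module,
      show (x + y) - (x - y) = (2 : ℝ) • y by module, norm_smul, norm_smul, hxy]
  obtain ⟨μ, hμp, hμq⟩ := hrefl _ _ hp hq hdiag
  refine ⟨μ.toLinearIsometryEquiv rfl, ?_⟩
  calc μ x = μ ((2 : ℝ)⁻¹ • ((x + y) + (x - y))) := by congr 1; module
    _ = y := by rw [map_smul, map_add, hμp, hμq]; module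

theorem exists_pos_forall_eq_mul_norm_sq {V : Type*} [NormedAddCommGroup V] [NormedSpace ℝ V]
    {Q : V → ℝ} (hsmul : ∀ (t : ℝ) v, Q (t • v) = t ^ 2 * Q v) (hpos : ∀ v, v ≠ 0 → 0 < Q v)
    (hsphere : ∀ x y : V, ‖x‖ = ‖y‖ → Q x = Q y) :
    ∃ c > 0, ∀ v, Q v = c * ‖v‖ ^ 2 := by
  have hzero : Q 0 = 0 := by simpa using hsmul 0 0
  rcases subsingleton_or_nontrivial V with hV | hV
  · exact ⟨1, one_pos, fun v => by simp [Subsingleton.elim v 0, hzero]⟩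
  obtain ⟨x₀, hx₀⟩ := exists_ne (0 : V)
  refine ⟨Q (‖x₀‖⁻¹ • x₀), hpos _ (by simp [hx₀]), fun v => ?_⟩
  rcases eq_or_ne v 0 with rfl | hv
  · simp [hzero]
  calc Q v = Q (‖v‖ • ‖v‖⁻¹ • v) := by rw [smul_inv_smul₀ (norm_ne_zero_iff.2 hv)]
    _ = ‖v‖ ^ 2 * Q (‖x₀‖⁻¹ • x₀) := by
      rw [hsmul, hsphere _ (‖x₀‖⁻¹ • x₀) (by simp [norm_smul, hv, hx₀])]
    _ = _ := mul_comm _ _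

theorem InnerProductSpaceable.of_forall_eq_mul_norm_sq {V : Type*} [NormedAddCommGroup V]
    {Q : V → ℝ} (hQ : ∀ x y, Q (x + y) + Q (x - y) = 2 * (Q x + Q y)) {c : ℝ} (hc : c ≠ 0)
    (hnorm : ∀ v, Q v = c * ‖v‖ ^ 2) : InnerProductSpaceable V where
  parallelogram_identity x y := by
    have := hQ x y
    simp only [hnorm] at this
    apply mul_left_cancel₀ hc
    linear_combination this

open MeasureTheory in
theorem InnerProductSpaceable.of_forall_exists_linearIsometryEquiv_apply_eq
    {V : Type*} [NormedAddCommGroup V] [NormedSpace ℝ V] [FiniteDimensional ℝ V]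
    (htrans : ∀ x y : V, ‖x‖ = ‖y‖ → ∃ g : V ≃ₗᵢ[ℝ] V, g x = y) : InnerProductSpaceable V := by
  let _ : MeasurableSpace (isometryUnits V) := borel _
  have _ : BorelSpace (isometryUnits V) := ⟨rfl⟩
  let ρ := (Units.coeHom (V →L[ℝ] V)).comp (isometryUnits V).subtype
  have hρ : Continuous ρ := Units.continuous_val.comp continuous_subtype_val
  let Q := averagedNormSq (Measure.haar : Measure (isometryUnits V)) ρ
  have hsphere (x y : V) (hxy : ‖x‖ = ‖y‖) : Q x = Q y := by
    obtain ⟨g, rfl⟩ := htrans x y hxy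
    exact (averagedNormSq_apply Measure.haar (ρ := ρ) ⟨_, g.toUnit_mem_isometryUnits⟩ x).symm
  obtain ⟨c, hc, hQ⟩ := exists_pos_forall_eq_mul_norm_sq (averagedNormSq_smul Measure.haar)
    (fun _ => averagedNormSq_pos Measure.haar hρ) hsphere
  exact .of_forall_eq_mul_norm_sq (averagedNormSq_add_add_sub Measure.haar hρ) hc.ne' hQ

theorem stmt_7_general (V : Type*) [NormedAddCommGroup V] [NormedSpace ℝ V]
    [FiniteDimensional ℝ V]
    (hrefl : ∀ p q : V, p ≠ 0 → q ≠ 0 → ‖p + q‖ = ‖p - q‖ →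
      ∃ μ : V →ₗᵢ[ℝ] V, μ p = p ∧ μ q = -q) :
    Nonempty (InnerProductSpace ℝ V) := by
  have := InnerProductSpaceable.of_forall_exists_linearIsometryEquiv_apply_eq fun _ _ =>
    exists_linearIsometryEquiv_apply_eq_of_reflections hrefl
  exact ⟨.ofNorm ℝ InnerProductSpaceable.parallelogram_identity⟩

theorem stmt_7 (V : Type*) [NormedAddCommGroup V] [NormedSpace ℝ V]
    [FiniteDimensional ℝ V] (hdim : Module.finrank ℝ V = 2)
    (hrefl : ∀ p q : V, p ≠ 0 → q ≠ 0 → ‖p + q‖ = ‖p - q‖ →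
      ∃ μ : V →ₗᵢ[ℝ] V, μ p = p ∧ μ q = -q) :
    Nonempty (InnerProductSpace ℝ V) :=
  stmt_7_general V hrefl
end

section
/- Let V be a real normed space. The norm on V arises from an inner product if and only if the norm restricted to every subspace of dimension at most 3 arises from an inner product. -/
/-! By the Fréchet–von Neumann–Jordan theorem a norm comes from an inner product exactly when it
satisfies the parallelogram identity. That identity involves only two vectors `x`, `y`, so it
holds in `V` as soon as it holds in each subspace `span {x, y}`, of dimension at most `2`;
conversely it passes to every subspace. -/

open Submodule

theorem nonempty_innerProductSpace_iff_innerProductSpaceable (𝕜 : Type*) [RCLike 𝕜]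
    (E : Type*) [NormedAddCommGroup E] [NormedSpace 𝕜 E] :
    Nonempty (InnerProductSpace 𝕜 E) ↔ InnerProductSpaceable E :=
  ⟨fun ⟨_⟩ => InnerProductSpace.toInnerProductSpaceable 𝕜,
    fun h => ⟨.ofNorm 𝕜 h.parallelogram_identity⟩⟩

section

variable {R E : Type*} [Ring R] [NormedAddCommGroup E] [Module R E]

theorem InnerProductSpaceable.submodule [InnerProductSpaceable E] (U : Submodule R E) :
    InnerProductSpaceable U :=
  ⟨fun x y => InnerProductSpaceable.parallelogram_identity (x : E) (y : E)⟩

theorem InnerProductSpaceable.of_span_pair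
    (h : ∀ x y : E, InnerProductSpaceable (span R {x, y})) : InnerProductSpaceable E := by
  refine ⟨fun x y => ?_⟩
  have hx : x ∈ span R {x, y} := subset_span (by simp)
  have hy : y ∈ span R {x, y} := subset_span (by simp)
  exact (h x y).parallelogram_identity ⟨x, hx⟩ ⟨y, hy⟩

end

theorem rank_span_pair_le {R M : Type*} [Ring R] [StrongRankCondition R] [AddCommGroup M]
    [Module R M] (x y : M) : Module.rank R (span R {x, y}) ≤ 2 :=
  calc Module.rank R (span R {x, y}) ≤ Cardinal.mk ({x, y} : Set M) := rank_span_le _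
    _ ≤ Cardinal.mk ({y} : Set M) + 1 := Cardinal.mk_insert_le
    _ = 2 := by rw [Cardinal.mk_singleton, one_add_one_eq_two]

theorem stmt_9 (V : Type*) [NormedAddCommGroup V] [NormedSpace ℝ V] :
    Nonempty (InnerProductSpace ℝ V) ↔
      ∀ U : Submodule ℝ V, Module.rank ℝ U ≤ 3 → Nonempty (InnerProductSpace ℝ U) := by
  simp only [nonempty_innerProductSpace_iff_innerProductSpaceable]
  refine ⟨fun _ U _ => InnerProductSpaceable.submodule U, fun h => ?_⟩
  refine InnerProductSpaceable.of_span_pair (R := ℝ) fun x y => h _ ?_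
  exact (rank_span_pair_le x y).trans (by norm_num)
end

section
/- Let V be a real normed space such that every 2-dimensional subspace of V is euclidean (i.e., the restricted norm arises from an inner product). Then V is euclidean: there exists an inner product on V inducing its norm. -/
/-! By the Jordan–von Neumann theorem a norm comes from an inner product as soon as it satisfies
the parallelogram identity. That identity involves only two vectors `x, y`: if they are
independent it holds in the euclidean plane `span {x, y}`, and if they are collinear it is a
direct computation. -/

open Submodule

theorem rank_span_pair_eq_two {K M : Type*} [DivisionRing K] [AddCommGroup M] [Module K M]
    {x y : M} (hx : x ≠ 0) (hy : ∀ a : K, a • x ≠ y) : Module.rank K (span K {x, y}) = 2 := by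
  have hne : x ≠ y := by simpa using hy 1
  rw [rank_span_set (linearIndepOn_id_pair hx hy), Cardinal.mk_insert (by simpa using hne),
    Cardinal.mk_singleton]
  norm_num

section

variable {V : Type*} [NormedAddCommGroup V]

theorem parallelogram_identity_of_mem {R : Type*} [Ring R] [Module R V] {U : Submodule R V}
    [InnerProductSpaceable U] {x y : V} (hx : x ∈ U) (hy : y ∈ U) :
    ‖x + y‖ * ‖x + y‖ + ‖x - y‖ * ‖x - y‖ = 2 * (‖x‖ * ‖x‖ + ‖y‖ * ‖y‖) :=
  InnerProductSpaceable.parallelogram_identity (⟨x, hx⟩ : U) ⟨y, hy⟩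

theorem parallelogram_identity_smul_right [NormedSpace ℝ V] (x : V) (a : ℝ) :
    ‖x + a • x‖ * ‖x + a • x‖ + ‖x - a • x‖ * ‖x - a • x‖ =
      2 * (‖x‖ * ‖x‖ + ‖a • x‖ * ‖a • x‖) := by
  have hadd : x + a • x = (1 + a) • x := by module
  have hsub : x - a • x = (1 - a) • x := by module
  rw [hadd, hsub, norm_smul, norm_smul, norm_smul, Real.norm_eq_abs, Real.norm_eq_abs,
    Real.norm_eq_abs]
  nlinarith [abs_mul_abs_self (1 + a), abs_mul_abs_self (1 - a), abs_mul_abs_self a]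

theorem innerProductSpaceable_of_forall_rank_eq_two [NormedSpace ℝ V]
    (h : ∀ U : Submodule ℝ V, Module.rank ℝ U = 2 → InnerProductSpaceable U) :
    InnerProductSpaceable V := by
  refine ⟨fun x y => ?_⟩
  by_cases hx : x = 0
  · subst hx
    simp only [zero_add, zero_sub, norm_neg, norm_zero]
    ring
  rcases em (∃ a : ℝ, a • x = y) with ⟨a, rfl⟩ | hxy
  · exact parallelogram_identity_smul_right x a
  have := h _ (rank_span_pair_eq_two hx (not_exists.mp hxy))
  exact parallelogram_identity_of_mem (U := span ℝ {x, y}) (subset_span (by simp))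
    (subset_span (by simp))

end

theorem stmt_10 (V : Type*) [NormedAddCommGroup V] [NormedSpace ℝ V]
    (h2 : ∀ U : Submodule ℝ V, Module.rank ℝ U = 2 → Nonempty (InnerProductSpace ℝ U)) :
    Nonempty (InnerProductSpace ℝ V) := by
  have : InnerProductSpaceable V := innerProductSpaceable_of_forall_rank_eq_two fun U hU =>
    let ⟨_⟩ := h2 U hU
    inferInstance
  exact nonempty_innerProductSpace ℝ V
end

section
/- Let V be a real normed space. Then the following are equivalent: (i) the Aronszajn criterion holds in V (for all v₁, w₁, v₂, w₂, if ‖v₁‖ = ‖v₂‖, ‖w₁‖ = ‖w₂‖ and ‖v₁ - w₁‖ = ‖v₂ - w₂‖, then ‖v₁ + w₁‖ = ‖v₂ + w₂‖); (ii) the norm of V arises from an inner product; (iii) the parallelogram identity ‖v + w‖² + ‖v - w‖² = 2‖v‖² + 2‖w‖² holds for all v, w in V. -/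
/-!
Aronszajn's criterion says that `‖v + w‖` is a function of `‖v‖`, `‖w‖` and `‖v - w‖`. Applied to
suitable quadruples, it shows that the set of scalars `t` with `‖x + t • y‖ = ‖t • x + y‖` whenever
`‖x‖ = ‖y‖` contains `0` and `1` and is closed under `t ↦ -t`, `t ↦ t⁻¹` and `(s, s + d) ↦ s + 2 d`. So it
contains `ℚ`, and being closed it is all of `ℝ`: this is Ficken's condition
`‖a • x + b • y‖ = ‖b • x + a • y‖`.

In a plane, Ficken's condition says that the linear map exchanging two vectors of equal norm is an
isometry, so linear isometries act transitively on spheres. They preserve the volume of the unit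
ball, hence have `|det| = 1`, so the quadratic form `w ↦ ∫_{‖ξ‖ ≤ 1} det (w, ξ) ^ 2 dξ` is invariant
under them and is therefore a positive multiple of `‖w‖ ^ 2`. Its parallelogram law then transfers
to the norm. The equivalence with inner product spaces is Jordan–von Neumann.
-/

open Module MeasureTheory Metric

section Ficken

variable {V : Type*} [NormedAddCommGroup V] [NormedSpace ℝ V]

variable (V) in
def fickenScalars : Set ℝ :=
  {t | ∀ x y : V, ‖x‖ = ‖y‖ → ‖x + t • y‖ = ‖t • x + y‖}

lemma isClosed_fickenScalars : IsClosed (fickenScalars V) := by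
  simp only [fickenScalars, Set.ofPred_forall]
  exact isClosed_iInter fun x => isClosed_iInter fun y => isClosed_iInter fun _ =>
    isClosed_eq (by fun_prop) (by fun_prop)

lemma zero_mem_fickenScalars : (0 : ℝ) ∈ fickenScalars V := by
  intro x y h
  simpa using h

lemma inv_mem_fickenScalars {t : ℝ} (ht : t ∈ fickenScalars V) : t⁻¹ ∈ fickenScalars V := by
  rcases eq_or_ne t 0 with rfl | ht0
  · simpa using zero_mem_fickenScalars
  intro x y h
  have hx : x + t⁻¹ • y = t⁻¹ • (t • x + y) := by
    rw [smul_add, smul_smul, inv_mul_cancel₀ ht0, one_smul]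
  have hy : t⁻¹ • x + y = t⁻¹ • (x + t • y) := by
    rw [smul_add, smul_smul, inv_mul_cancel₀ ht0, one_smul, add_comm]
  rw [hx, hy, norm_smul, norm_smul, ht x y h]

section Aronszajn

variable (hA : ∀ v₁ w₁ v₂ w₂ : V, ‖v₁‖ = ‖v₂‖ → ‖w₁‖ = ‖w₂‖ → ‖v₁ - w₁‖ = ‖v₂ - w₂‖ →
    ‖v₁ + w₁‖ = ‖v₂ + w₂‖)
include hA

lemma neg_mem_fickenScalars {t : ℝ} (ht : t ∈ fickenScalars V) : -t ∈ fickenScalars V := by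
  intro x y h
  have := hA x (-t • y) y (-t • x) h (by simp [norm_smul, h])
    (by simpa [sub_eq_add_neg, add_comm] using ht x y h)
  simpa [add_comm] using this

lemma add_add_mem_fickenScalars {s d : ℝ} (hs : s ∈ fickenScalars V)
    (hsd : s + d ∈ fickenScalars V) : s + d + d ∈ fickenScalars V := by
  intro x y h
  have := hA (x + (s + d) • y) (d • y) ((s + d) • x + y) (d • x) (hsd x y h)
    (by simp [norm_smul, h]) (by convert hs x y h using 2 <;> module)
  convert this using 2 <;> module

lemma add_natCast_mul_mem_fickenScalars {s d : ℝ} (hs : s ∈ fickenScalars V)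
    (hsd : s + d ∈ fickenScalars V) (n : ℕ) : s + n * d ∈ fickenScalars V := by
  induction n using Nat.twoStepInduction with
  | zero => simpa using hs
  | one => simpa using hsd
  | more n h₀ h₁ =>
    have := add_add_mem_fickenScalars hA h₀ (d := d) (by convert h₁ using 1; push_cast; ring)
    convert this using 1
    push_cast; ring

lemma ratCast_mem_fickenScalars (q : ℚ) : (q : ℝ) ∈ fickenScalars V := by
  have hden : ((q.den : ℝ))⁻¹ ∈ fickenScalars V := by
    have := add_natCast_mul_mem_fickenScalars hA zero_mem_fickenScalars (d := 1)
      (by rw [zero_add]; exact fun x y _ => by simp) q.den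
    exact inv_mem_fickenScalars (by simpa using this)
  have habs : |(q : ℝ)| ∈ fickenScalars V := by
    have := add_natCast_mul_mem_fickenScalars hA zero_mem_fickenScalars (by simpa using hden)
      q.num.natAbs
    rw [Rat.cast_def, abs_div, Nat.abs_cast]
    simpa [Nat.cast_natAbs, div_eq_mul_inv] using this
  rcases abs_choice (q : ℝ) with h | h
  · rwa [h] at habs
  · simpa [h] using neg_mem_fickenScalars hA habs

theorem norm_smul_add_smul_comm {x y : V} (h : ‖x‖ = ‖y‖) (a b : ℝ) :
    ‖a • x + b • y‖ = ‖b • x + a • y‖ := by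
  have hall : fickenScalars V = Set.univ := by
    refine Set.eq_univ_of_univ_subset ?_
    rw [← Rat.denseRange_cast.closure_eq]
    exact closure_minimal (Set.range_subset_iff.2 (ratCast_mem_fickenScalars hA))
      isClosed_fickenScalars
  rcases eq_or_ne a 0 with rfl | ha
  · simp [norm_smul, h]
  have := (hall ▸ Set.mem_univ (b / a) : b / a ∈ fickenScalars V) x y h
  calc ‖a • x + b • y‖ = ‖a‖ * ‖x + (b / a) • y‖ := by
        rw [← norm_smul, smul_add, smul_smul, mul_div_cancel₀ _ ha]
    _ = ‖a‖ * ‖(b / a) • x + y‖ := by rw [this]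
    _ = ‖b • x + a • y‖ := by rw [← norm_smul, smul_add, smul_smul, mul_div_cancel₀ _ ha]

end Aronszajn

end Ficken

namespace LinearIsometryEquiv

variable {E : Type*} [NormedAddCommGroup E] [NormedSpace ℝ E] [FiniteDimensional ℝ E]

theorem abs_det (g : E ≃ₗᵢ[ℝ] E) : |LinearMap.det (g : E →ₗ[ℝ] E)| = 1 := by
  borelize E
  let μ : Measure E := Measure.addHaar
  have hball := Measure.addHaar_image_linearMap μ (g : E →ₗ[ℝ] E) (closedBall 0 1)
  rw [show ⇑(g : E →ₗ[ℝ] E) = g from rfl, g.image_closedBall, map_zero] at hball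
  have hpos : μ (closedBall 0 1) ≠ 0 := (measure_closedBall_pos μ 0 one_pos).ne'
  have hfin : μ (closedBall 0 1) ≠ ⊤ := (isCompact_closedBall 0 1).measure_lt_top.ne
  exact ENNReal.ofReal_eq_one.1 ((ENNReal.mul_eq_right hpos hfin).1 hball.symm)

theorem map_addHaar [MeasurableSpace E] [BorelSpace E] (μ : Measure E) [μ.IsAddHaarMeasure]
    (g : E ≃ₗᵢ[ℝ] E) : μ.map g = μ := by
  have hdet := g.abs_det
  have := Measure.map_linearMap_addHaar_eq_smul_addHaar μ (f := (g : E →ₗ[ℝ] E))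
    (by rw [← abs_ne_zero, hdet]; exact one_ne_zero)
  rwa [abs_inv, hdet, inv_one, ENNReal.ofReal_one, one_smul] at this

end LinearIsometryEquiv

namespace Module.Basis

variable {E : Type*} [NormedAddCommGroup E] [NormedSpace ℝ E] (b : Basis (Fin 2) ℝ E)

noncomputable def areaForm : E →ₗ[ℝ] E →ₗ[ℝ] ℝ :=
  LinearMap.mk₂ ℝ (fun w ξ => b.coord 0 w * b.coord 1 ξ - b.coord 1 w * b.coord 0 ξ)
    (fun _ _ _ => by simp only [map_add]; ring)
    (fun _ _ _ => by simp only [map_smul, smul_eq_mul]; ring)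
    (fun _ _ _ => by simp only [map_add]; ring)
    (fun _ _ _ => by simp only [map_smul, smul_eq_mul]; ring)

lemma areaForm_apply (w ξ : E) :
    b.areaForm w ξ = b.coord 0 w * b.coord 1 ξ - b.coord 1 w * b.coord 0 ξ := rfl

lemma areaForm_eq_det (w ξ : E) : b.areaForm w ξ = b.det ![w, ξ] := by
  rw [det_apply, Matrix.det_fin_two, areaForm_apply]
  simp only [coord_apply, toMatrix_apply, Matrix.cons_val_zero, Matrix.cons_val_one,
    Matrix.cons_val_fin_one]
  ring

lemma areaForm_map (f : E →ₗ[ℝ] E) (w ξ : E) :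
    b.areaForm (f w) (f ξ) = LinearMap.det f * b.areaForm w ξ := by
  rw [areaForm_eq_det, areaForm_eq_det, ← b.det_comp]
  congr 1
  ext i
  fin_cases i <;> rfl

lemma areaForm_ne_zero {w : E} (hw : w ≠ 0) : b.areaForm w ≠ 0 := by
  intro h
  refine hw ((b.forall_coord_eq_zero_iff).1 fun i => ?_)
  have h0 : b.coord 1 w = 0 := by simpa [areaForm_apply] using LinearMap.congr_fun h (b 0)
  have h1 : b.coord 0 w = 0 := by simpa [areaForm_apply] using LinearMap.congr_fun h (b 1)
  fin_cases i
  exacts [h1, h0]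

variable [MeasurableSpace E] (μ : Measure E)

noncomputable def momentForm (w : E) : ℝ :=
  ∫ ξ in closedBall 0 1, b.areaForm w ξ ^ 2 ∂μ

lemma momentForm_smul (c : ℝ) (w : E) : b.momentForm μ (c • w) = c ^ 2 * b.momentForm μ w := by
  simp only [momentForm, map_smul, LinearMap.smul_apply, smul_eq_mul, mul_pow, integral_const_mul]

variable [FiniteDimensional ℝ E] [BorelSpace E]

lemma integrableOn_areaForm_sq [IsFiniteMeasureOnCompacts μ] (w : E) :
    IntegrableOn (fun ξ => b.areaForm w ξ ^ 2) (closedBall 0 1) μ :=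
  ((b.areaForm w).continuous_of_finiteDimensional.pow 2).continuousOn.integrableOn_compact
    (isCompact_closedBall 0 1)

lemma momentForm_parallelogram [IsFiniteMeasureOnCompacts μ] (p q : E) :
    b.momentForm μ (p + q) + b.momentForm μ (p - q) =
      2 * b.momentForm μ p + 2 * b.momentForm μ q := by
  have hint := b.integrableOn_areaForm_sq μ
  calc b.momentForm μ (p + q) + b.momentForm μ (p - q)
      = ∫ ξ in closedBall 0 1, (b.areaForm (p + q) ξ ^ 2 + b.areaForm (p - q) ξ ^ 2) ∂μ :=
        (integral_add (hint _) (hint _)).symm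
    _ = ∫ ξ in closedBall 0 1, (2 * b.areaForm p ξ ^ 2 + 2 * b.areaForm q ξ ^ 2) ∂μ := by
        congr 1; ext ξ
        simp only [map_add, map_sub, LinearMap.add_apply, LinearMap.sub_apply]
        ring
    _ = 2 * b.momentForm μ p + 2 * b.momentForm μ q := by
        rw [integral_add ((hint p).const_mul 2) ((hint q).const_mul 2), integral_const_mul,
          integral_const_mul, momentForm, momentForm]

lemma momentForm_pos [μ.IsAddHaarMeasure] {w : E} (hw : w ≠ 0) : 0 < b.momentForm μ w := by
  refine (setIntegral_pos_iff_support_of_nonneg_ae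
    (Filter.Eventually.of_forall fun ξ => sq_nonneg _) (b.integrableOn_areaForm_sq μ w)).2 ?_
  have hker : μ (LinearMap.ker (b.areaForm w)) = 0 :=
    Measure.addHaar_submodule μ _ fun h => b.areaForm_ne_zero hw (LinearMap.ker_eq_top.1 h)
  calc 0 < μ (ball 0 1) := measure_ball_pos μ 0 one_pos
    _ = μ (ball 0 1 \ LinearMap.ker (b.areaForm w)) := (measure_sdiff_null hker).symm
    _ ≤ μ (Function.support (fun ξ => b.areaForm w ξ ^ 2) ∩ closedBall 0 1) := by
        refine measure_mono fun ξ ⟨hball, hξ⟩ => ⟨?_, ball_subset_closedBall hball⟩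
        simpa using hξ

lemma momentForm_linearIsometryEquiv [μ.IsAddHaarMeasure] (g : E ≃ₗᵢ[ℝ] E) (w : E) :
    b.momentForm μ (g w) = b.momentForm μ w := by
  have hg : MeasurePreserving g μ μ := ⟨g.continuous.measurable, g.map_addHaar μ⟩
  calc b.momentForm μ (g w) = ∫ ξ in g '' closedBall 0 1, b.areaForm (g w) ξ ^ 2 ∂μ := by
        rw [g.image_closedBall, map_zero, momentForm]
    _ = ∫ ξ in closedBall 0 1, b.areaForm (g w) (g ξ) ^ 2 ∂μ :=
        hg.setIntegral_image_emb g.toHomeomorph.measurableEmbedding _ _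
    _ = b.momentForm μ w := by
        congr 1; ext ξ
        rw [show b.areaForm (g w) (g ξ) = b.areaForm ((g : E →ₗ[ℝ] E) w) ((g : E →ₗ[ℝ] E) ξ)
          from rfl, areaForm_map, mul_pow, ← sq_abs, g.abs_det, one_pow, one_mul]

end Module.Basis

section Parallelogram

variable {E : Type*} [NormedAddCommGroup E] [NormedSpace ℝ E]

theorem parallelogram_of_exists_linearIsometryEquiv_apply_eq (hE : finrank ℝ E = 2)
    (htrans : ∀ x y : E, ‖x‖ = ‖y‖ → ∃ g : E ≃ₗᵢ[ℝ] E, g x = y) (x y : E) :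
    ‖x + y‖ ^ 2 + ‖x - y‖ ^ 2 = 2 * ‖x‖ ^ 2 + 2 * ‖y‖ ^ 2 := by
  have : FiniteDimensional ℝ E := .of_finrank_pos (by omega)
  borelize E
  let μ : Measure E := Measure.addHaar
  let b : Basis (Fin 2) ℝ E := finBasisOfFinrankEq ℝ E hE
  set e : E := ‖b 0‖⁻¹ • b 0
  have he : ‖e‖ = 1 := norm_smul_inv_norm (b.ne_zero 0)
  have hQ : ∀ w, b.momentForm μ w = ‖w‖ ^ 2 * b.momentForm μ e := fun w => by
    obtain ⟨g, hg⟩ := htrans (‖w‖ • e) w (by simp [norm_smul, he])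
    rw [← hg, b.momentForm_linearIsometryEquiv, b.momentForm_smul, hg]
  have hpar := b.momentForm_parallelogram μ x y
  rw [hQ (x + y), hQ (x - y), hQ x, hQ y] at hpar
  have hpos := b.momentForm_pos μ (w := e) (norm_ne_zero_iff.1 (he ▸ one_ne_zero))
  exact mul_right_cancel₀ hpos.ne' (by linear_combination hpar)

theorem exists_linearIsometryEquiv_apply_eq (hE : finrank ℝ E = 2)
    (hF : ∀ x y : E, ‖x‖ = ‖y‖ → ∀ a b : ℝ, ‖a • x + b • y‖ = ‖b • x + a • y‖)
    {x y : E} (hxy : ‖x‖ = ‖y‖) : ∃ g : E ≃ₗᵢ[ℝ] E, g x = y := by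
  rcases eq_or_ne x 0 with rfl | hx
  · exact ⟨.refl ℝ E, by simpa [eq_comm] using hxy⟩
  by_cases hli : LinearIndependent ℝ ![x, y]
  · let b := basisOfLinearIndependentOfCardEqFinrank hli (by simp [hE])
    have hb : ⇑b = ![x, y] := coe_basisOfLinearIndependentOfCardEqFinrank _ _
    let swap := b.equiv b (Equiv.swap 0 1)
    have hswap_x : swap x = y := by simpa [hb] using b.equiv_apply 0 b (Equiv.swap 0 1)
    have hswap_y : swap y = x := by simpa [hb] using b.equiv_apply 1 b (Equiv.swap 0 1)
    have hswap (z : E) : ‖swap z‖ = ‖z‖ := by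
      obtain ⟨s, t, rfl⟩ : ∃ s t : ℝ, s • x + t • y = z :=
        ⟨_, _, by simpa [Fin.sum_univ_two, hb] using b.sum_repr z⟩
      rw [map_add, map_smul, map_smul, hswap_x, hswap_y, add_comm]
      exact (hF x y hxy s t).symm
    exact ⟨{ swap with norm_map' := hswap }, hswap_x⟩
  · obtain ⟨a, rfl⟩ : ∃ a : ℝ, a • x = y := by simpa [LinearIndependent.pair_iff' hx] using hli
    have ha : |a| = 1 := by
      simpa [norm_smul, norm_ne_zero_iff.2 hx] using hxy.symm
    rcases abs_eq_abs.1 (ha.trans abs_one.symm) with rfl | rfl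
    · exact ⟨.refl ℝ E, by simp⟩
    · exact ⟨.neg ℝ, by simp⟩

theorem parallelogram_of_norm_smul_add_smul_comm
    (hF : ∀ x y : E, ‖x‖ = ‖y‖ → ∀ a b : ℝ, ‖a • x + b • y‖ = ‖b • x + a • y‖) (u v : E) :
    ‖u + v‖ ^ 2 + ‖u - v‖ ^ 2 = 2 * ‖u‖ ^ 2 + 2 * ‖v‖ ^ 2 := by
  rcases eq_or_ne u 0 with rfl | hu
  · simp only [zero_add, zero_sub, norm_neg, norm_zero]
    ring
  by_cases hli : LinearIndependent ℝ ![u, v]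
  · let W := Submodule.span ℝ (Set.range ![u, v])
    have hW : finrank ℝ W = 2 := by simpa using finrank_span_eq_card hli
    have hFW : ∀ x y : W, ‖x‖ = ‖y‖ → ∀ a b : ℝ, ‖a • x + b • y‖ = ‖b • x + a • y‖ :=
      fun x y h a b => hF x y h a b
    exact parallelogram_of_exists_linearIsometryEquiv_apply_eq hW
      (fun x y h => exists_linearIsometryEquiv_apply_eq hW hFW h)
      ⟨u, Submodule.subset_span ⟨0, rfl⟩⟩ ⟨v, Submodule.subset_span ⟨1, rfl⟩⟩
  · obtain ⟨a, rfl⟩ : ∃ a : ℝ, a • u = v := by simpa [LinearIndependent.pair_iff' hu] using hli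
    rw [show u + a • u = (1 + a) • u by module, show u - a • u = (1 - a) • u by module]
    simp only [norm_smul, mul_pow, Real.norm_eq_abs, sq_abs]
    ring

end Parallelogram

theorem stmt_14 (V : Type*) [NormedAddCommGroup V] [NormedSpace ℝ V] :
    List.TFAE
      [ ∀ v₁ w₁ v₂ w₂ : V, ‖v₁‖ = ‖v₂‖ → ‖w₁‖ = ‖w₂‖ → ‖v₁ - w₁‖ = ‖v₂ - w₂‖ →
          ‖v₁ + w₁‖ = ‖v₂ + w₂‖,
        Nonempty (InnerProductSpace ℝ V),
        ∀ v w : V, ‖v + w‖ ^ 2 + ‖v - w‖ ^ 2 = 2 * ‖v‖ ^ 2 + 2 * ‖w‖ ^ 2 ] := by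
  tfae_have 1 → 3 := fun hA =>
    parallelogram_of_norm_smul_add_smul_comm fun _ _ h => norm_smul_add_smul_comm hA h
  tfae_have 3 → 2 := fun h =>
    ⟨InnerProductSpace.ofNorm ℝ fun x y => by linear_combination h x y⟩
  tfae_have 2 → 3 := by
    rintro ⟨_⟩ v w
    linear_combination parallelogram_law_with_norm ℝ v w
  tfae_have 3 → 1 := by
    intro h v₁ w₁ v₂ w₂ hv hw hvw
    refine (sq_eq_sq₀ (norm_nonneg _) (norm_nonneg _)).1 ?_
    linear_combination h v₁ w₁ - h v₂ w₂ + 2 * (‖v₁‖ + ‖v₂‖) * hv + 2 * (‖w₁‖ + ‖w₂‖) * hw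
      - (‖v₁ - w₁‖ + ‖v₂ - w₂‖) * hvw
  tfae_finish
end

section
/- Let V be a 2-dimensional real normed space such that whenever p and q are nonzero with ‖p + q‖ = ‖p - q‖ there is a linear isometry of V fixing p and negating q. Fix unit vectors e₁, e₂ with ‖e₁ + e₂‖ = ‖e₁ - e₂‖, and identify V with ℝ² via this basis. Then the map ρ sending (x, y) to (-y, x) (rotation through a right angle in these coordinates) is an isometry of V. -/
/-!
A linear map fixing `a + b` and negating `a - b` swaps `a` and `b`. The hypothesis applies to the
pair `e₁ + e₂`, `e₁ - e₂` because their sum and difference `2 • e₁`, `2 • e₂` have equal norms, so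
some isometry swaps `e₁` and `e₂`; composed with the isometry fixing `e₁` and negating `e₂` it is
the rotation `(x, y) ↦ (-y, x)`.
-/

section Reflections

variable {V : Type*}

section Normed

variable [NormedAddCommGroup V] [NormedSpace ℝ V]

variable (V) in
def HasReflections : Prop :=
  ∀ p q : V, p ≠ 0 → q ≠ 0 → ‖p + q‖ = ‖p - q‖ → ∃ μ : V →ₗᵢ[ℝ] V, μ p = p ∧ μ q = -q

theorem add_ne_zero_of_norm_add_eq_norm_sub {a b : V} (ha : a ≠ 0) (h : ‖a + b‖ = ‖a - b‖) :
    a + b ≠ 0 := by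
  intro hab
  rw [hab, norm_zero, eq_comm, norm_eq_zero, sub_eq_zero] at h
  subst h
  exact ha (by simpa [← two_smul ℝ] using hab)

theorem sub_ne_zero_of_norm_add_eq_norm_sub {a b : V} (ha : a ≠ 0) (h : ‖a + b‖ = ‖a - b‖) :
    a - b ≠ 0 := by
  rw [sub_eq_add_neg] at h ⊢
  exact add_ne_zero_of_norm_add_eq_norm_sub ha (by rwa [sub_neg_eq_add, eq_comm])

theorem norm_add_add_sub_eq_norm_add_sub_sub {a b : V} (h : ‖a‖ = ‖b‖) :
    ‖(a + b) + (a - b)‖ = ‖(a + b) - (a - b)‖ := by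
  rw [add_add_sub_cancel, add_sub_sub_cancel, ← two_smul ℝ a, ← two_smul ℝ b, norm_smul,
    norm_smul, h]

end Normed

theorem LinearMap.map_eq_of_map_add_of_map_sub [AddCommGroup V] [Module ℝ V] (f : V →ₗ[ℝ] V)
    {a b : V} (hadd : f (a + b) = a + b) (hsub : f (a - b) = -(a - b)) : f a = b ∧ f b = a := by
  have ha : a = (2 : ℝ)⁻¹ • ((a + b) + (a - b)) := by module
  have hb : b = (2 : ℝ)⁻¹ • ((a + b) - (a - b)) := by module
  constructor
  · rw [ha, map_smul, map_add, hadd, hsub]; module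
  · rw [hb, map_smul, map_sub, hadd, hsub]; module

theorem HasReflections.exists_swap [NormedAddCommGroup V] [NormedSpace ℝ V]
    (hV : HasReflections V) {a b : V} (ha : a ≠ 0) (hab : ‖a‖ = ‖b‖)
    (h : ‖a + b‖ = ‖a - b‖) : ∃ ν : V →ₗᵢ[ℝ] V, ν a = b ∧ ν b = a := by
  obtain ⟨ν, hadd, hsub⟩ := hV (a + b) (a - b) (add_ne_zero_of_norm_add_eq_norm_sub ha h)
    (sub_ne_zero_of_norm_add_eq_norm_sub ha h) (norm_add_add_sub_eq_norm_add_sub_sub hab)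
  exact ⟨ν, ν.toLinearMap.map_eq_of_map_add_of_map_sub hadd hsub⟩

end Reflections

theorem stmt_15_general (V : Type*) [NormedAddCommGroup V] [NormedSpace ℝ V]
    (hrefl : ∀ p q : V, p ≠ 0 → q ≠ 0 → ‖p + q‖ = ‖p - q‖ →
      ∃ μ : V →ₗᵢ[ℝ] V, μ p = p ∧ μ q = -q)
    (e₁ e₂ : V) (he₁ : ‖e₁‖ = 1) (he₂ : ‖e₂‖ = 1)
    (hdiag : ‖e₁ + e₂‖ = ‖e₁ - e₂‖) :
    ∀ x y : ℝ, ‖x • e₁ + y • e₂‖ = ‖(-y) • e₁ + x • e₂‖ := by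
  have ne_zero {e : V} (he : ‖e‖ = 1) : e ≠ 0 := norm_ne_zero_iff.mp (by simp [he])
  obtain ⟨μ, hμ₁, hμ₂⟩ := hrefl e₁ e₂ (ne_zero he₁) (ne_zero he₂) hdiag
  obtain ⟨ν, hν₁, hν₂⟩ :=
    HasReflections.exists_swap hrefl (ne_zero he₁) (he₁.trans he₂.symm) hdiag
  intro x y
  have hρ : ν (μ (x • e₁ + y • e₂)) = (-y) • e₁ + x • e₂ := by
    simp only [map_add, map_smul, hμ₁, hμ₂, map_neg, hν₁, hν₂]
    module
  rw [← hρ, ν.norm_map, μ.norm_map]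

theorem stmt_15 (V : Type*) [NormedAddCommGroup V] [NormedSpace ℝ V]
    [FiniteDimensional ℝ V] (hdim : Module.finrank ℝ V = 2)
    (hrefl : ∀ p q : V, p ≠ 0 → q ≠ 0 → ‖p + q‖ = ‖p - q‖ →
      ∃ μ : V →ₗᵢ[ℝ] V, μ p = p ∧ μ q = -q)
    (e₁ e₂ : V) (he₁ : ‖e₁‖ = 1) (he₂ : ‖e₂‖ = 1)
    (hind : LinearIndependent ℝ ![e₁, e₂])
    (hdiag : ‖e₁ + e₂‖ = ‖e₁ - e₂‖) :
    ∀ x y : ℝ, ‖x • e₁ + y • e₂‖ = ‖(-y) • e₁ + x • e₂‖ :=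
  stmt_15_general V hrefl e₁ e₂ he₁ he₂ hdiag
end

section
/- Let V be a 3-dimensional real normed space in which every 2-dimensional subspace is euclidean. Let U be a 2-dimensional subspace and let e₃ be a unit vector such that the affine plane e₃ + U supports the unit ball of V. Then for every unit vector p in U, e₃ is orthogonal to p in the (euclidean) 2-dimensional subspace spanned by p and e₃, and in particular ‖s • p + c • e₃‖ = 1 whenever s² + c² = 1. -/
/-!
The support hypothesis says that `e₃` is Birkhoff orthogonal to every `p ∈ U`:
`‖e₃‖ ≤ ‖e₃ + t • p‖` for all `t`. Since `e₃ ∉ U`, the plane `span {e₃, p}` is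
two-dimensional, hence euclidean, and there `‖e₃ + t • p‖² = 1 + 2 t ⟪e₃, p⟫ + t²`.
This quadratic is minimal at `t = 0` only if `⟪e₃, p⟫ = 0`, and then Pythagoras gives
`‖s • p + c • e₃‖² = s² + c²`.
-/

open Module Submodule

open scoped RealInnerProductSpace

theorem finrank_span_pair_eq_two_of_notMem {K V : Type*} [DivisionRing K] [AddCommGroup V]
    [Module K V] {U : Submodule K V} {x y : V} (hx : x ∉ U) (hy : y ∈ U) (hy₀ : y ≠ 0) :
    finrank K (span K {x, y}) = 2 := by
  have hli : LinearIndependent K ![x, y] :=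
    linearIndependent_fin2.2 ⟨hy₀, fun a hxa => hx ((show a • y = x from hxa) ▸ U.smul_mem a hy)⟩
  rw [← Matrix.range_cons_cons_empty x y ![], finrank_span_eq_card hli, Fintype.card_fin]

section InnerProductSpace

variable {F : Type*} [NormedAddCommGroup F] [InnerProductSpace ℝ F]

theorem inner_eq_zero_of_forall_norm_le_norm_add_smul {x y : F}
    (h : ∀ t : ℝ, ‖x‖ ≤ ‖x + t • y‖) : ⟪x, y⟫ = 0 := by
  have hquad : ∀ t : ℝ, 0 ≤ ‖y‖ ^ 2 * (t * t) + 2 * ⟪x, y⟫ * t + 0 := fun t => by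
    have hsq := pow_le_pow_left₀ (norm_nonneg x) (h t) 2
    rw [norm_add_sq_real, inner_smul_right, norm_smul, Real.norm_eq_abs, mul_pow, sq_abs] at hsq
    linarith
  have := discrim_le_zero hquad
  rw [discrim] at this
  nlinarith [sq_nonneg ⟪x, y⟫]

theorem norm_smul_add_smul_eq_one_of_inner_eq_zero {x y : F} (hx : ‖x‖ = 1) (hy : ‖y‖ = 1)
    (hxy : ⟪x, y⟫ = 0) {s c : ℝ} (hsc : s ^ 2 + c ^ 2 = 1) : ‖s • x + c • y‖ = 1 := by
  have horth : ⟪s • x, c • y⟫ = 0 := by simp [inner_smul_left, inner_smul_right, hxy]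
  have hsq := norm_add_sq_eq_norm_sq_add_norm_sq_real horth
  simp only [norm_smul, Real.norm_eq_abs, hx, hy, mul_one] at hsq
  nlinarith [norm_nonneg (s • x + c • y), abs_mul_abs_self s, abs_mul_abs_self c]

end InnerProductSpace

theorem norm_smul_add_smul_eq_one_of_forall_norm_le_norm_add_smul {E : Type*}
    [NormedAddCommGroup E] [NormedSpace ℝ E] [InnerProductSpaceable E] {x y : E}
    (hx : ‖x‖ = 1) (hy : ‖y‖ = 1) (h : ∀ t : ℝ, ‖x‖ ≤ ‖x + t • y‖) {s c : ℝ}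
    (hsc : s ^ 2 + c ^ 2 = 1) : ‖s • y + c • x‖ = 1 := by
  -- `ofNorm`, unlike an instance extracted from `nonempty_innerProductSpace`, keeps the given `•`.
  let _ := InnerProductSpace.ofNorm ℝ (InnerProductSpaceable.parallelogram_identity (E := E))
  have hxy := inner_eq_zero_of_forall_norm_le_norm_add_smul h
  exact norm_smul_add_smul_eq_one_of_inner_eq_zero hy hx (real_inner_comm x y ▸ hxy) hsc

theorem stmt_17_general (V : Type*) [NormedAddCommGroup V] [NormedSpace ℝ V]
    (h2 : ∀ W : Submodule ℝ V, Module.finrank ℝ W = 2 → Nonempty (InnerProductSpace ℝ W))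
    (U : Submodule ℝ V)
    (e₃ : V) (he₃ : ‖e₃‖ = 1)
    (hsupp : ∀ u ∈ U, 1 ≤ ‖e₃ + u‖) :
    ∀ p ∈ U, ‖p‖ = 1 →
      (∀ t : ℝ, ‖e₃‖ ≤ ‖e₃ + t • p‖) ∧
      (∀ s c : ℝ, s ^ 2 + c ^ 2 = 1 → ‖s • p + c • e₃‖ = 1) := by
  intro p hp hp₁
  have hbirkhoff : ∀ t : ℝ, ‖e₃‖ ≤ ‖e₃ + t • p‖ := fun t => he₃ ▸ hsupp _ (U.smul_mem t hp)
  refine ⟨hbirkhoff, fun s c hsc => ?_⟩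
  have he₃U : e₃ ∉ U := fun he₃U => by
    have := hsupp _ (U.neg_mem he₃U)
    norm_num at this
  set W := span ℝ {e₃, p}
  have hW : finrank ℝ W = 2 :=
    finrank_span_pair_eq_two_of_notMem he₃U hp (norm_ne_zero_iff.mp (hp₁ ▸ one_ne_zero))
  have : InnerProductSpaceable W := (h2 W hW).elim fun _ => inferInstance
  exact norm_smul_add_smul_eq_one_of_forall_norm_le_norm_add_smul
    (x := (⟨e₃, subset_span (by simp)⟩ : W)) (y := (⟨p, subset_span (by simp)⟩ : W)) he₃ hp₁
    (fun t => hbirkhoff t) hsc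

theorem stmt_17 (V : Type*) [NormedAddCommGroup V] [NormedSpace ℝ V]
    [FiniteDimensional ℝ V] (hdim : Module.finrank ℝ V = 3)
    (h2 : ∀ W : Submodule ℝ V, Module.finrank ℝ W = 2 → Nonempty (InnerProductSpace ℝ W))
    (U : Submodule ℝ V) (hU : Module.finrank ℝ U = 2)
    (e₃ : V) (he₃ : ‖e₃‖ = 1)
    (hsupp : ∀ u ∈ U, 1 ≤ ‖e₃ + u‖) :
    ∀ p ∈ U, ‖p‖ = 1 →
      (∀ t : ℝ, ‖e₃‖ ≤ ‖e₃ + t • p‖) ∧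
      (∀ s c : ℝ, s ^ 2 + c ^ 2 = 1 → ‖s • p + c • e₃‖ = 1) :=
  stmt_17_general V h2 U e₃ he₃ hsupp
end
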